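/- Define sinc : ℝ → ℝ by sinc(x) = sin(πx)/(πx) for x ≠ 0 and sinc(0) = 1, and define K₁, K₂ : ℝ → ℂ by K₁(x) = exp(e^{-2πi x} - 1) · sinc(x) and K₂(x) = exp(cos(2πx) - 1) · sinc(x). Then (i) |K₁(x)|² = |K₂(x)|² = exp(2cos(2πx) - 2) · sinc(x)² for all x ∈ ℝ, and (ii) there exist x₁, x₂, x₃ ∈ ℝ such that det((K₁(x_i - x_j))_{1≤i,j≤3}) ≠ det((K₂(x_i - x_j))_{1≤i,j≤3}). -/

import Mathlib

/-- The sinc function, `sinc(x) = sin(πx)/(πx)` with `sinc(0) = 1`. -/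
noncomputable def sinc (x : ℝ) : ℝ :=
  if x = 0 then 1 else Real.sin (Real.pi * x) / (Real.pi * x)

/-- `K₁(x) = exp(e^{-2πix} - 1) sinc(x)`. -/
noncomputable def K1 (x : ℝ) : ℂ :=
  Complex.exp (Complex.exp (-2 * (Real.pi : ℂ) * Complex.I * (x : ℂ)) - 1) * (sinc x : ℂ)

/-- `K₂(x) = exp(cos(2πx) - 1) sinc(x)`. -/
noncomputable def K2 (x : ℝ) : ℂ :=
  Complex.exp (((Real.cos (2 * Real.pi * x) : ℝ) : ℂ) - 1) * (sinc x : ℂ)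

/-!
`K₁ = K₂ · e^{-i sin 2πx}` with `K₂` real and even, so both kernels are Hermitian and have the
same modulus. The determinant of a Hermitian `3 × 3` matrix depends only on its diagonal, the
moduli of its entries and `Re (A₀₁ A₁₂ A₂₀)`. At the points `0, 1/4, 1/2` the two cycle products
differ by the phase `e^{2i}`, and `cos 2 ≠ 1`.
-/

open Complex ComplexConjugate

namespace Matrix

theorem isHermitian_of_apply_sub {G α ι : Type*} [AddGroup G] [Star α] {K : G → α}
    (hK : ∀ t, K (-t) = star (K t)) (x : ι → G) :
    (Matrix.of fun i j => K (x i - x j)).IsHermitian :=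
  IsHermitian.ext fun i j => by simp only [of_apply, ← hK, neg_sub]

theorem IsHermitian.det_fin_three {𝕜 : Type*} [RCLike 𝕜] {A : Matrix (Fin 3) (Fin 3) 𝕜}
    (hA : A.IsHermitian) :
    A.det = A 0 0 * A 1 1 * A 2 2 - A 0 0 * (‖A 1 2‖ ^ 2 : ℝ) - A 1 1 * (‖A 2 0‖ ^ 2 : ℝ)
      - A 2 2 * (‖A 0 1‖ ^ 2 : ℝ) + 2 * (RCLike.re (A 0 1 * A 1 2 * A 2 0) : ℝ) := by
  have hstar (i j : Fin 3) : A j i = conj (A i j) := by rw [← hA.apply, RCLike.star_def]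
  have hcycle := RCLike.add_conj (A 0 1 * A 1 2 * A 2 0)
  rw [map_mul, map_mul] at hcycle
  rw [Matrix.det_fin_three, hstar 0 1, hstar 2 0, hstar 1 2]
  push_cast
  linear_combination -A 2 2 * RCLike.mul_conj (A 0 1) - A 1 1 * RCLike.mul_conj (A 2 0)
    - A 0 0 * RCLike.mul_conj (A 1 2) + hcycle

theorem IsHermitian.det_fin_three_sub {𝕜 : Type*} [RCLike 𝕜] {A B : Matrix (Fin 3) (Fin 3) 𝕜}
    (hA : A.IsHermitian) (hB : B.IsHermitian) (hdiag : ∀ i, A i i = B i i)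
    (hnorm : ∀ i j, ‖A i j‖ = ‖B i j‖) :
    A.det - B.det =
      2 * (RCLike.re (A 0 1 * A 1 2 * A 2 0) - RCLike.re (B 0 1 * B 1 2 * B 2 0) : ℝ) := by
  rw [hA.det_fin_three, hB.det_fin_three, hdiag 0, hdiag 1, hdiag 2, hnorm 1 2, hnorm 2 0,
    hnorm 0 1]
  push_cast
  ring

end Matrix

lemma sinc_neg (x : ℝ) : sinc (-x) = sinc x := by
  unfold sinc
  rcases eq_or_ne x 0 with rfl | hx
  · simp
  · rw [if_neg (neg_ne_zero.mpr hx), if_neg hx, mul_neg, Real.sin_neg, neg_div_neg_eq]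

lemma sinc_ne_zero {x : ℝ} (hx : |x| < 1) : sinc x ≠ 0 := by
  unfold sinc
  split_ifs with h0
  · exact one_ne_zero
  have hπ := Real.pi_pos
  obtain ⟨hlo, hhi⟩ := abs_lt.mp hx
  refine div_ne_zero ?_ (mul_ne_zero hπ.ne' h0)
  rw [Ne, Real.sin_eq_zero_iff_of_lt_of_lt (by nlinarith) (by nlinarith)]
  exact mul_ne_zero hπ.ne' h0

lemma K2_eq_ofReal (x : ℝ) :
    K2 x = ((Real.exp (Real.cos (2 * Real.pi * x) - 1) * sinc x : ℝ) : ℂ) := by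
  rw [K2]
  push_cast
  rfl

lemma K2_neg (x : ℝ) : K2 (-x) = conj (K2 x) := by
  rw [K2_eq_ofReal, K2_eq_ofReal, conj_ofReal, mul_neg, Real.cos_neg, sinc_neg]

lemma norm_K2_sq (x : ℝ) :
    ‖K2 x‖ ^ 2 = Real.exp (2 * Real.cos (2 * Real.pi * x) - 2) * sinc x ^ 2 := by
  rw [K2_eq_ofReal, norm_real, Real.norm_eq_abs, sq_abs, mul_pow, ← Real.exp_nat_mul]
  ring_nf

lemma K1_eq_K2_mul_exp (x : ℝ) :
    K1 x = K2 x * exp (↑(-Real.sin (2 * Real.pi * x)) * I) := by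
  have hphase : -2 * (Real.pi : ℂ) * I * x = ↑(-(2 * Real.pi * x)) * I := by
    push_cast
    ring
  rw [K1, K2, hphase, mul_right_comm (cexp _), ← Complex.exp_add, exp_mul_I, ← ofReal_cos,
    ← ofReal_sin, Real.cos_neg, Real.sin_neg]
  push_cast
  ring_nf

lemma norm_K1 (x : ℝ) : ‖K1 x‖ = ‖K2 x‖ := by
  rw [K1_eq_K2_mul_exp, norm_mul, norm_exp_ofReal_mul_I, mul_one]

lemma K1_neg (x : ℝ) : K1 (-x) = conj (K1 x) := by
  rw [K1_eq_K2_mul_exp, K1_eq_K2_mul_exp, map_mul, K2_neg, ← exp_conj, map_mul, conj_ofReal,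
    conj_I, mul_neg, Real.sin_neg]
  push_cast
  ring_nf

lemma re_K1_mul_K1_mul_K1 (a b c : ℝ) :
    (K1 a * K1 b * K1 c).re = (K2 a * K2 b * K2 c).re
      * Real.cos (Real.sin (2 * Real.pi * a) + Real.sin (2 * Real.pi * b)
        + Real.sin (2 * Real.pi * c)) := by
  set θ := Real.sin (2 * Real.pi * a) + Real.sin (2 * Real.pi * b) + Real.sin (2 * Real.pi * c)
  have hphase : exp (↑(-θ) * I) = exp (↑(-Real.sin (2 * Real.pi * a)) * I)
      * exp (↑(-Real.sin (2 * Real.pi * b)) * I) * exp (↑(-Real.sin (2 * Real.pi * c)) * I) := by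
    rw [← Complex.exp_add, ← Complex.exp_add]
    push_cast [θ]
    ring_nf
  have hprod : K1 a * K1 b * K1 c = K2 a * K2 b * K2 c * exp (↑(-θ) * I) := by
    rw [hphase, K1_eq_K2_mul_exp, K1_eq_K2_mul_exp, K1_eq_K2_mul_exp]
    ring
  rw [hprod, K2_eq_ofReal, K2_eq_ofReal, K2_eq_ofReal, ← ofReal_mul, ← ofReal_mul, re_ofReal_mul,
    exp_ofReal_mul_I_re, Real.cos_neg, ofReal_re]

lemma re_K2_mul_K2_mul_K2_ne_zero {a b c : ℝ} (ha : |a| < 1) (hb : |b| < 1) (hc : |c| < 1) :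
    (K2 a * K2 b * K2 c).re ≠ 0 := by
  simp only [K2_eq_ofReal, ← ofReal_mul, ofReal_re]
  have hfactor {x : ℝ} (hx : |x| < 1) : Real.exp (Real.cos (2 * Real.pi * x) - 1) * sinc x ≠ 0 :=
    mul_ne_zero (Real.exp_ne_zero _) (sinc_ne_zero hx)
  exact mul_ne_zero (mul_ne_zero (hfactor ha) (hfactor hb)) (hfactor hc)

lemma det_K1_sub_det_K2 (x : Fin 3 → ℝ) :
    (Matrix.of fun i j => K1 (x i - x j)).det - (Matrix.of fun i j => K2 (x i - x j)).det =
      2 * ((K2 (x 0 - x 1) * K2 (x 1 - x 2) * K2 (x 2 - x 0)).re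
        * (Real.cos (Real.sin (2 * Real.pi * (x 0 - x 1)) + Real.sin (2 * Real.pi * (x 1 - x 2))
          + Real.sin (2 * Real.pi * (x 2 - x 0))) - 1) : ℝ) := by
  rw [(Matrix.isHermitian_of_apply_sub K1_neg x).det_fin_three_sub
    (Matrix.isHermitian_of_apply_sub K2_neg x) (fun i => by simp [K1_eq_K2_mul_exp])
    (fun i j => norm_K1 _)]
  simp only [Matrix.of_apply, RCLike.re_to_complex, re_K1_mul_K1_mul_K1, mul_sub_one]
  rfl

/-- `|K₁|² = |K₂|² = exp(2cos(2πx) - 2) sinc(x)²` everywhere, yet some `3×3`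
determinant `det(Kᵢ(x_i - x_j))` distinguishes `K₁` from `K₂`. -/
theorem stmt_18 :
    (∀ x : ℝ,
      ‖K1 x‖^2 = Real.exp (2 * Real.cos (2 * Real.pi * x) - 2) * (sinc x)^2 ∧
      ‖K2 x‖^2 = Real.exp (2 * Real.cos (2 * Real.pi * x) - 2) * (sinc x)^2) ∧
    ∃ x : Fin 3 → ℝ,
      (Matrix.of fun i j => K1 (x i - x j)).det ≠
      (Matrix.of fun i j => K2 (x i - x j)).det := by
  refine ⟨fun x => ⟨by rw [norm_K1, norm_K2_sq], norm_K2_sq x⟩, ![0, 1/4, 1/2], fun hdet => ?_⟩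
  have hdiff := det_K1_sub_det_K2 ![0, 1/4, 1/2]
  rw [hdet, sub_self] at hdiff
  simp only [Matrix.cons_val_zero, Matrix.cons_val_one, Matrix.cons_val_two, Matrix.tail_cons,
    Matrix.head_cons] at hdiff
  have hsin₁ : Real.sin (2 * Real.pi * (0 - 1 / 4)) = -1 := by
    rw [show 2 * Real.pi * (0 - 1 / 4) = -(Real.pi / 2) by ring, Real.sin_neg, Real.sin_pi_div_two]
  have hsin₂ : Real.sin (2 * Real.pi * (1 / 4 - 1 / 2)) = -1 := by
    rw [show 2 * Real.pi * (1 / 4 - 1 / 2) = -(Real.pi / 2) by ring, Real.sin_neg,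
      Real.sin_pi_div_two]
  have hsin₃ : Real.sin (2 * Real.pi * (1 / 2 - 0)) = 0 := by
    rw [show 2 * Real.pi * (1 / 2 - 0) = Real.pi by ring, Real.sin_pi]
  have hcos : Real.cos (-1 + -1 + 0) ≠ 1 := by
    have := Real.pi_gt_three
    rw [Ne, Real.cos_eq_one_iff_of_lt_of_lt (by linarith) (by linarith)]
    norm_num
  have hr := re_K2_mul_K2_mul_K2_ne_zero (a := 0 - 1 / 4) (b := 1 / 4 - 1 / 2) (c := 1 / 2 - 0)
    (by norm_num [abs_lt]) (by norm_num [abs_lt]) (by norm_num [abs_lt])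
  rw [hsin₁, hsin₂, hsin₃] at hdiff
  simp only [zero_eq_mul, two_ne_zero, ofReal_eq_zero, mul_eq_zero, hr, sub_eq_zero, hcos,
    or_self] at hdiff
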